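/- Let c > 1/2 and δ > 0 be fixed. Let ℓ ≥ 4 and let ℓ_1, ℓ_2, ℓ_3, ℓ_4 be positive integers with ℓ_1+ℓ_2+ℓ_3+ℓ_4 = ℓ. Then there exist constants C > 0 and ρ ∈ (0,1), depending only on ℓ, c and δ, such that for all n ≥ 1, all vectors y_1,…,y_{ℓ−2} ∈ ℝ^n, and all signs ε_1,…,ε_{ℓ−2} ∈ {1,−1}: V_n^{−2ℓc} ∫_{ℝ^n}∫_{ℝ^n} f(x_1)·( ∏_{i=1}^{ℓ_1−1} f(ε_i x_1 + y_i) )·f(x_2)·( ∏_{i=ℓ_1}^{ℓ_1+ℓ_2−2} f(ε_i x_2 + y_i) )·( ∏_{i=ℓ_1+ℓ_2−1}^{ℓ_1+ℓ_2+ℓ_3−2} f(ε_i(x_1+x_2) + y_i) )·( ∏_{i=ℓ_1+ℓ_2+ℓ_3−1}^{ℓ−2} f(ε_i(x_1−x_2) + y_i) ) dx_1 dx_2 ≤ C·ρ^n, where f = f_{c,δ}. -/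

import Mathlib

/-!
Every factor except `f(ε_a(x₁+x₂)+y_a)` and `f(ε_b(x₁-x₂)+y_b)`, the first factors of the third
and fourth products, is bounded by `sup f = (δ/V_n)^{-2c}`. The change of variables
`(x₁, x₂) ↦ (x₁+x₂, x₁-x₂)`, of Jacobian `2ⁿ` (a convolution evaluated at `2x₁`), turns the
remaining double integral into `2⁻ⁿ (∫ f)²`, and radial integration gives
`∫ f = V_n (δ/V_n)^{1-2c} / (2c-1)`. The `ℓ - 2` bounded factors and the two integrals carry
exactly the power `V_n^{2ℓc}`, so the bound is `δ^{2-2cℓ} (2c-1)^{-2} 2^{-n}`.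
-/

open MeasureTheory

/-- `V_n = π^{n/2} / Γ(n/2 + 1)`, the volume of the unit ball in `ℝⁿ`. -/
noncomputable def unitBallVol (n : ℕ) : ℝ :=
  Real.pi ^ ((n : ℝ) / 2) / Real.Gamma ((n : ℝ) / 2 + 1)

/-- `R_n(δ) = (δ / V_n)^{1/n}`, the radius of a ball of volume `δ` in `ℝⁿ`. -/
noncomputable def cutRadius (n : ℕ) (δ : ℝ) : ℝ :=
  (δ / unitBallVol n) ^ (1 / (n : ℝ))

/-- `f_{c,δ}(x) = |x|^{-2cn}` if `|x| > R_n(δ)`, and `0` otherwise. -/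
noncomputable def truncPower (n : ℕ) (c δ : ℝ) (x : EuclideanSpace ℝ (Fin n)) : ℝ :=
  if cutRadius n δ < ‖x‖ then ‖x‖ ^ (-(2 * c * (n : ℝ))) else 0

open Module

section Products

open Finset

variable {α ι : Type*} {f : α → ℝ} {B : ℝ}

theorem prod_comp_le_pow_card (hf₀ : ∀ x, 0 ≤ f x) (hfB : ∀ x, f x ≤ B) (s : Finset ι)
    (u : ι → α) : ∏ i ∈ s, f (u i) ≤ B ^ #s :=
  (prod_le_prod (fun _ _ => hf₀ _) fun _ _ => hfB _).trans_eq (prod_const B)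

theorem prod_comp_le_mul_pow_card_sub_one (hf₀ : ∀ x, 0 ≤ f x) (hfB : ∀ x, f x ≤ B)
    {s : Finset ι} {a : ι} (ha : a ∈ s) (u : ι → α) :
    ∏ i ∈ s, f (u i) ≤ f (u a) * B ^ (#s - 1) := by
  classical
  rw [← mul_prod_erase s _ ha, ← card_erase_of_mem ha]
  exact mul_le_mul_of_nonneg_left (prod_comp_le_pow_card hf₀ hfB _ u) (hf₀ _)

theorem mul_prod_mul_mul_prod_mul_prod_mul_prod_le (hf₀ : ∀ x, 0 ≤ f x) (hfB : ∀ x, f x ≤ B)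
    (p q : α) {s₁ s₂ s₃ s₄ : Finset ι} (u₁ u₂ u₃ u₄ : ι → α) {a b : ι} (ha : a ∈ s₃)
    (hb : b ∈ s₄) :
    f p * (∏ i ∈ s₁, f (u₁ i)) * f q * (∏ i ∈ s₂, f (u₂ i)) * (∏ i ∈ s₃, f (u₃ i)) *
        (∏ i ∈ s₄, f (u₄ i))
      ≤ B ^ (#s₁ + #s₂ + #s₃ + #s₄) * (f (u₃ a) * f (u₄ b)) := by
  have hB : 0 ≤ B := (hf₀ p).trans (hfB p)
  have hfa : 0 ≤ f (u₃ a) := hf₀ _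
  calc
    _ ≤ B * B ^ #s₁ * B * B ^ #s₂ * (f (u₃ a) * B ^ (#s₃ - 1)) * (f (u₄ b) * B ^ (#s₄ - 1)) := by
      gcongr
      all_goals first
        | exact hf₀ _
        | exact hfB _
        | exact prod_nonneg fun _ _ => hf₀ _
        | exact prod_comp_le_pow_card hf₀ hfB _ _
        | exact prod_comp_le_mul_pow_card_sub_one hf₀ hfB ‹_› _
    _ = _ := by
      obtain ⟨k₃, hk₃⟩ := Nat.exists_eq_add_of_lt (card_pos.2 ⟨a, ha⟩)
      obtain ⟨k₄, hk₄⟩ := Nat.exists_eq_add_of_lt (card_pos.2 ⟨b, hb⟩)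
      rw [hk₃, hk₄]
      simp only [zero_add, Nat.add_sub_cancel]
      ring

end Products

section Haar

variable {E F : Type*} [NormedAddCommGroup E] [NormedSpace ℝ E] [MeasurableSpace E]
  {μ : Measure E} [NormedAddCommGroup F]

theorem integral_comp_add_mul_comp_sub [MeasurableAdd E] [μ.IsAddLeftInvariant] (g h : E → ℝ)
    (x₁ : E) :
    ∫ x₂, g (x₁ + x₂) * h (x₁ - x₂) ∂μ
      = convolution g h (ContinuousLinearMap.mul ℝ ℝ) μ ((2 : ℝ) • x₁) := by
  rw [convolution_def, eq_comm, ← integral_add_left_eq_self _ x₁]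
  congr 1 with x₂
  rw [ContinuousLinearMap.mul_apply', two_smul, add_sub_add_left_eq_sub]

variable [BorelSpace E] [FiniteDimensional ℝ E] [μ.IsAddHaarMeasure]

theorem integral_comp_smul_add_of_abs_eq_one [NormedSpace ℝ F] (f : E → F) {a : ℝ} (ha : |a| = 1)
    (v : E) :
    ∫ x, f (a • x + v) ∂μ = ∫ x, f x ∂μ := by
  rw [Measure.integral_comp_smul μ (fun x => f (x + v)), integral_add_right_eq_self,
    abs_inv, abs_pow, ha, one_pow, inv_one, one_smul]

theorem MeasureTheory.Integrable.comp_smul_add {f : E → F} (hf : Integrable f μ) {a : ℝ}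
    (ha : a ≠ 0) (v : E) :
    Integrable (fun x => f (a • x + v)) μ :=
  (hf.comp_add_right v).comp_smul ha

variable {g h : E → ℝ}

theorem integrable_integral_comp_add_mul_comp_sub (hg : Integrable g μ) (hh : Integrable h μ) :
    Integrable (fun x₁ => ∫ x₂, g (x₁ + x₂) * h (x₁ - x₂) ∂μ) μ := by
  simp only [integral_comp_add_mul_comp_sub]
  exact (hg.integrable_convolution _ hh).comp_smul two_ne_zero

theorem integral_integral_comp_add_mul_comp_sub (hg : Integrable g μ) (hh : Integrable h μ) :
    ∫ x₁, ∫ x₂, g (x₁ + x₂) * h (x₁ - x₂) ∂μ ∂μ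
      = (2 ^ finrank ℝ E)⁻¹ * ((∫ x, g x ∂μ) * ∫ x, h x ∂μ) := by
  simp only [integral_comp_add_mul_comp_sub]
  rw [Measure.integral_comp_smul, integral_convolution _ hg hh, abs_of_pos (by positivity),
    smul_eq_mul, ContinuousLinearMap.mul_apply']

theorem integrable_comp_add_mul_comp_sub {C : ℝ} (hg : Integrable g μ) (hgC : ∀ x, ‖g x‖ ≤ C)
    (hh : Integrable h μ) (x₁ : E) : Integrable (fun x₂ => g (x₁ + x₂) * h (x₁ - x₂)) μ :=
  (hh.comp_sub_left x₁).bdd_mul (hg.comp_add_left x₁).aestronglyMeasurable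
    (ae_of_all _ fun _ => hgC _)

theorem integral_integral_le_of_le_comp_add_mul_comp_sub {Φ : E → E → ℝ} {C : ℝ}
    (hΦ : ∀ x₁ x₂, 0 ≤ Φ x₁ x₂) (hΦgh : ∀ x₁ x₂, Φ x₁ x₂ ≤ g (x₁ + x₂) * h (x₁ - x₂))
    (hg : Integrable g μ) (hgC : ∀ x, ‖g x‖ ≤ C) (hh : Integrable h μ) :
    ∫ x₁, ∫ x₂, Φ x₁ x₂ ∂μ ∂μ ≤ (2 ^ finrank ℝ E)⁻¹ * ((∫ x, g x ∂μ) * ∫ x, h x ∂μ) := by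
  rw [← integral_integral_comp_add_mul_comp_sub hg hh]
  refine integral_mono_of_nonneg (.of_forall fun x₁ => integral_nonneg (hΦ x₁))
    (integrable_integral_comp_add_mul_comp_sub hg hh) (.of_forall fun x₁ => ?_)
  exact integral_mono_of_nonneg (.of_forall (hΦ x₁))
    (integrable_comp_add_mul_comp_sub hg hgC hh x₁) (.of_forall fun x₂ => hΦgh x₁ x₂)

theorem integral_integral_shifted_products_le {f : E → ℝ} {B : ℝ} (hf : Integrable f μ)
    (hf₀ : ∀ x, 0 ≤ f x) (hfB : ∀ x, f x ≤ B) {ℓ ℓ₁ ℓ₂ ℓ₃ ℓ₄ : ℕ} (h₁ : 0 < ℓ₁) (h₂ : 0 < ℓ₂)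
    (h₃ : 0 < ℓ₃) (h₄ : 0 < ℓ₄) (hsum : ℓ₁ + ℓ₂ + ℓ₃ + ℓ₄ = ℓ) (y : ℕ → E) {ε : ℕ → ℝ}
    (hε : ∀ i, |ε i| = 1) :
    ∫ x₁, ∫ x₂,
        f x₁ * (∏ i ∈ Finset.Ico 1 ℓ₁, f (ε i • x₁ + y i)) *
        f x₂ * (∏ i ∈ Finset.Ico ℓ₁ (ℓ₁ + ℓ₂ - 1), f (ε i • x₂ + y i)) *
        (∏ i ∈ Finset.Ico (ℓ₁ + ℓ₂ - 1) (ℓ₁ + ℓ₂ + ℓ₃ - 1), f (ε i • (x₁ + x₂) + y i)) *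
        (∏ i ∈ Finset.Ico (ℓ₁ + ℓ₂ + ℓ₃ - 1) (ℓ - 1), f (ε i • (x₁ - x₂) + y i)) ∂μ ∂μ
      ≤ (2 ^ finrank ℝ E)⁻¹ * (B ^ (ℓ - 2) * (∫ x, f x ∂μ) ^ 2) := by
  set a := ℓ₁ + ℓ₂ - 1
  set b := ℓ₁ + ℓ₂ + ℓ₃ - 1
  have hε₀ : ∀ i, ε i ≠ 0 := fun i h => by simpa [h] using hε i
  have hcard : (Finset.Ico 1 ℓ₁).card + (Finset.Ico ℓ₁ a).card + (Finset.Ico a b).card +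
      (Finset.Ico b (ℓ - 1)).card = ℓ - 2 := by
    simp only [Nat.card_Ico]; omega
  calc
    _ ≤ (2 ^ finrank ℝ E)⁻¹ *
        ((∫ x, f (ε a • x + y a) ∂μ) * ∫ x, B ^ (ℓ - 2) * f (ε b • x + y b) ∂μ) := by
      refine integral_integral_le_of_le_comp_add_mul_comp_sub (fun x₁ x₂ => ?_) (fun x₁ x₂ => ?_)
        (hf.comp_smul_add (hε₀ _) _)
        (fun _ => (Real.norm_of_nonneg (hf₀ _)).trans_le (hfB _))
        ((hf.comp_smul_add (hε₀ _) _).const_mul _)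
      · have hprod₀ (s : Finset ℕ) (u : ℕ → E) : 0 ≤ ∏ i ∈ s, f (u i) :=
          Finset.prod_nonneg fun _ _ => hf₀ _
        apply_rules [mul_nonneg]
      · refine (mul_prod_mul_mul_prod_mul_prod_mul_prod_le hf₀ hfB x₁ x₂ _ _ _ _
          (Finset.left_mem_Ico.2 (by omega : a < b))
          (Finset.left_mem_Ico.2 (by omega : b < ℓ - 1))).trans_eq ?_
        rw [hcard, mul_left_comm]
    _ = _ := by
      rw [integral_const_mul, integral_comp_smul_add_of_abs_eq_one _ (hε _),
        integral_comp_smul_add_of_abs_eq_one _ (hε _)]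
      ring

end Haar

section TruncPower

open Metric Set

variable {n : ℕ} {c δ : ℝ}

theorem unitBallVol_pos (n : ℕ) : 0 < unitBallVol n :=
  div_pos (Real.rpow_pos_of_pos Real.pi_pos _) (Real.Gamma_pos_of_pos (by positivity))

theorem measureReal_ball_zero_one_eq_unitBallVol (hn : 0 < n) :
    volume.real (ball (0 : EuclideanSpace ℝ (Fin n)) 1) = unitBallVol n := by
  have : Nonempty (Fin n) := ⟨⟨0, hn⟩⟩
  have hΓ : 0 < Real.Gamma ((n : ℝ) / 2 + 1) := Real.Gamma_pos_of_pos (by positivity)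
  rw [measureReal_def, EuclideanSpace.volume_ball, Fintype.card_fin, ENNReal.ofReal_one, one_pow,
    one_mul, ENNReal.toReal_ofReal (by positivity), unitBallVol, Real.sqrt_eq_rpow,
    ← Real.rpow_mul_natCast Real.pi_pos.le, one_div_mul_eq_div]

theorem cutRadius_pos (hδ : 0 < δ) (n : ℕ) : 0 < cutRadius n δ :=
  Real.rpow_pos_of_pos (div_pos hδ (unitBallVol_pos n)) _

theorem cutRadius_rpow_mul (hδ : 0 < δ) (hn : 0 < n) (a : ℝ) :
    cutRadius n δ ^ (n * a) = (δ / unitBallVol n) ^ a := by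
  rw [cutRadius, ← Real.rpow_mul (div_pos hδ (unitBallVol_pos n)).le, one_div,
    inv_mul_cancel_left₀ (by positivity)]

theorem truncPower_nonneg (x : EuclideanSpace ℝ (Fin n)) : 0 ≤ truncPower n c δ x := by
  unfold truncPower
  split_ifs <;> positivity

theorem truncPower_le (hc : 0 ≤ c) (hδ : 0 < δ) (hn : 0 < n) (x : EuclideanSpace ℝ (Fin n)) :
    truncPower n c δ x ≤ (δ / unitBallVol n) ^ (-(2 * c)) := by
  rw [← cutRadius_rpow_mul hδ hn, mul_neg, mul_comm (n : ℝ)]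
  unfold truncPower
  split_ifs with h
  · exact Real.rpow_le_rpow_of_nonpos (cutRadius_pos hδ n) h.le (by simp; positivity)
  · exact (Real.rpow_pos_of_pos (cutRadius_pos hδ n) _).le

noncomputable def truncProfile (n : ℕ) (c R r : ℝ) : ℝ :=
  if R < r then r ^ (-(2 * c * n)) else 0

theorem truncPower_eq_truncProfile :
    truncPower n c δ = fun x => truncProfile n c (cutRadius n δ) ‖x‖ :=
  rfl

theorem pow_smul_truncProfile_eqOn (hn : 0 < n) (R : ℝ) :
    EqOn (fun r => r ^ (n - 1) • truncProfile n c R r)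
      ((Ioi R).indicator fun r => r ^ ((n : ℝ) - 1 - 2 * c * n)) (Ioi 0) := by
  intro r (hr : 0 < r)
  simp only [truncProfile, indicator, mem_Ioi, smul_eq_mul]
  split_ifs
  · rw [← Real.rpow_natCast, Nat.cast_sub hn, ← Real.rpow_add hr, Nat.cast_one, ← sub_eq_add_neg]
  · exact mul_zero _

theorem integrable_truncPower (hc : 1 / 2 < c) (hδ : 0 < δ) (hn : 0 < n) :
    Integrable (truncPower n c δ) := by
  have : Nonempty (Fin n) := ⟨⟨0, hn⟩⟩
  have hn1 : (1 : ℝ) ≤ n := by exact_mod_cast hn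
  rw [truncPower_eq_truncProfile, integrable_fun_norm_addHaar, finrank_euclideanSpace_fin,
    integrableOn_congr_fun (pow_smul_truncProfile_eqOn hn _) measurableSet_Ioi]
  exact ((integrableOn_Ioi_rpow_of_lt (by nlinarith) (cutRadius_pos hδ n)).integrable_indicator
    measurableSet_Ioi).integrableOn

theorem integral_truncPower (hc : 1 / 2 < c) (hδ : 0 < δ) (hn : 0 < n) :
    ∫ x, truncPower n c δ x = unitBallVol n * (δ / unitBallVol n) ^ (1 - 2 * c) / (2 * c - 1) := by
  have : Nonempty (Fin n) := ⟨⟨0, hn⟩⟩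
  have hn1 : (1 : ℝ) ≤ n := by exact_mod_cast hn
  have hR := cutRadius_pos hδ n
  rw [truncPower_eq_truncProfile, integral_fun_norm_addHaar, finrank_euclideanSpace_fin,
    measureReal_ball_zero_one_eq_unitBallVol hn,
    setIntegral_congr_fun measurableSet_Ioi (pow_smul_truncProfile_eqOn hn _),
    setIntegral_indicator measurableSet_Ioi, Ioi_inter_Ioi, max_eq_right hR.le,
    integral_Ioi_rpow_of_lt (by nlinarith) hR,
    show (n : ℝ) - 1 - 2 * c * n + 1 = n * (1 - 2 * c) by ring, cutRadius_rpow_mul hδ hn,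
    nsmul_eq_mul, smul_eq_mul]
  have : 2 * c - 1 ≠ 0 := by linarith
  have : 1 - 2 * c ≠ 0 := by linarith
  have : (n : ℝ) ≠ 0 := by positivity
  field_simp
  ring

end TruncPower

theorem rpow_mul_pow_mul_sq {V δ c : ℝ} (hV : 0 < V) (hδ : 0 < δ) {ℓ : ℕ} (hℓ : 2 ≤ ℓ) :
    V ^ (-(2 * (ℓ : ℝ) * c)) * (((δ / V) ^ (-(2 * c))) ^ (ℓ - 2) * (V * (δ / V) ^ (1 - 2 * c)) ^ 2)
      = δ ^ (2 - 2 * c * ℓ) := by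
  obtain ⟨a, rfl⟩ : ∃ a, Real.exp a = V := ⟨_, Real.exp_log hV⟩
  obtain ⟨b, rfl⟩ : ∃ b, Real.exp b = δ := ⟨_, Real.exp_log hδ⟩
  obtain ⟨k, rfl⟩ := Nat.exists_eq_add_of_le' hℓ
  simp only [← Real.exp_sub, ← Real.exp_mul, ← Real.exp_nat_mul, ← Real.exp_add, Nat.add_sub_cancel]
  congr 1
  push_cast
  ring

theorem shifted_four_fold_integral_bound_general
    (c δ : ℝ) (hc : 1 / 2 < c) (hδ : 0 < δ)
    (ℓ ℓ₁ ℓ₂ ℓ₃ ℓ₄ : ℕ)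
    (h₁ : 0 < ℓ₁) (h₂ : 0 < ℓ₂) (h₃ : 0 < ℓ₃) (h₄ : 0 < ℓ₄)
    (hsum : ℓ₁ + ℓ₂ + ℓ₃ + ℓ₄ = ℓ) :
    ∃ C ρ : ℝ, 0 < C ∧ ρ ∈ Set.Ioo (0 : ℝ) 1 ∧
      ∀ n : ℕ, 1 ≤ n →
      ∀ y : ℕ → EuclideanSpace ℝ (Fin n),
      ∀ ε : ℕ → ℝ, (∀ i, ε i = 1 ∨ ε i = -1) →
        unitBallVol n ^ (-(2 * (ℓ : ℝ) * c)) *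
          ∫ x₁ : EuclideanSpace ℝ (Fin n), ∫ x₂ : EuclideanSpace ℝ (Fin n),
            truncPower n c δ x₁ *
              (∏ i ∈ Finset.Ico 1 ℓ₁, truncPower n c δ (ε i • x₁ + y i)) *
            truncPower n c δ x₂ *
              (∏ i ∈ Finset.Ico ℓ₁ (ℓ₁ + ℓ₂ - 1), truncPower n c δ (ε i • x₂ + y i)) *
            (∏ i ∈ Finset.Ico (ℓ₁ + ℓ₂ - 1) (ℓ₁ + ℓ₂ + ℓ₃ - 1),
              truncPower n c δ (ε i • (x₁ + x₂) + y i)) *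
            (∏ i ∈ Finset.Ico (ℓ₁ + ℓ₂ + ℓ₃ - 1) (ℓ - 1),
              truncPower n c δ (ε i • (x₁ - x₂) + y i))
        ≤ C * ρ ^ n := by
  have h2c : 0 < 2 * c - 1 := by linarith
  refine ⟨δ ^ (2 - 2 * c * ℓ) / (2 * c - 1) ^ 2, 1 / 2, by positivity, ⟨by norm_num, by norm_num⟩,
    fun n hn y ε hε => ?_⟩
  have habs : ∀ i, |ε i| = 1 := fun i => by rcases hε i with h | h <;> simp [h]
  calc
    _ ≤ unitBallVol n ^ (-(2 * (ℓ : ℝ) * c)) * ((2 ^ finrank ℝ (EuclideanSpace ℝ (Fin n)))⁻¹ *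
        (((δ / unitBallVol n) ^ (-(2 * c))) ^ (ℓ - 2) * (∫ x, truncPower n c δ x) ^ 2)) :=
      mul_le_mul_of_nonneg_left
        (integral_integral_shifted_products_le (integrable_truncPower hc hδ hn) truncPower_nonneg
          (truncPower_le (by linarith) hδ hn) h₁ h₂ h₃ h₄ hsum y habs)
        (Real.rpow_nonneg (unitBallVol_pos n).le _)
    _ = _ := by
      rw [integral_truncPower hc hδ hn, finrank_euclideanSpace_fin, div_pow, mul_pow,
        ← rpow_mul_pow_mul_sq (unitBallVol_pos n) hδ (by omega : 2 ≤ ℓ), one_div_pow]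
      field_simp

/-- for positive integers `ℓ_1 + ℓ_2 + ℓ_3 + ℓ_4 = ℓ ≥ 4`, the normalized
shifted double integral
`V_n^{-2ℓc} ∫∫ f(x₁) ∏_{i=1}^{ℓ₁-1} f(ε_i x₁ + y_i) · f(x₂) ∏_{i=ℓ₁}^{ℓ₁+ℓ₂-2} f(ε_i x₂ + y_i)
 · ∏_{i=ℓ₁+ℓ₂-1}^{ℓ₁+ℓ₂+ℓ₃-2} f(ε_i(x₁+x₂) + y_i) · ∏_{i=ℓ₁+ℓ₂+ℓ₃-1}^{ℓ-2} f(ε_i(x₁-x₂) + y_i)`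
is bounded by `C ρⁿ`, uniformly in the shifts `y_i` and signs `ε_i`. -/
theorem shifted_four_fold_integral_bound
    (c δ : ℝ) (hc : 1 / 2 < c) (hδ : 0 < δ)
    (ℓ ℓ₁ ℓ₂ ℓ₃ ℓ₄ : ℕ) (hℓ : 4 ≤ ℓ)
    (h₁ : 0 < ℓ₁) (h₂ : 0 < ℓ₂) (h₃ : 0 < ℓ₃) (h₄ : 0 < ℓ₄)
    (hsum : ℓ₁ + ℓ₂ + ℓ₃ + ℓ₄ = ℓ) :
    ∃ C ρ : ℝ, 0 < C ∧ ρ ∈ Set.Ioo (0 : ℝ) 1 ∧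
      ∀ n : ℕ, 1 ≤ n →
      ∀ y : ℕ → EuclideanSpace ℝ (Fin n),
      ∀ ε : ℕ → ℝ, (∀ i, ε i = 1 ∨ ε i = -1) →
        unitBallVol n ^ (-(2 * (ℓ : ℝ) * c)) *
          ∫ x₁ : EuclideanSpace ℝ (Fin n), ∫ x₂ : EuclideanSpace ℝ (Fin n),
            truncPower n c δ x₁ *
              (∏ i ∈ Finset.Ico 1 ℓ₁, truncPower n c δ (ε i • x₁ + y i)) *
            truncPower n c δ x₂ *
              (∏ i ∈ Finset.Ico ℓ₁ (ℓ₁ + ℓ₂ - 1), truncPower n c δ (ε i • x₂ + y i)) *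
            (∏ i ∈ Finset.Ico (ℓ₁ + ℓ₂ - 1) (ℓ₁ + ℓ₂ + ℓ₃ - 1),
              truncPower n c δ (ε i • (x₁ + x₂) + y i)) *
            (∏ i ∈ Finset.Ico (ℓ₁ + ℓ₂ + ℓ₃ - 1) (ℓ - 1),
              truncPower n c δ (ε i • (x₁ - x₂) + y i))
        ≤ C * ρ ^ n :=
  shifted_four_fold_integral_bound_general c δ hc hδ ℓ ℓ₁ ℓ₂ ℓ₃ ℓ₄ h₁ h₂ h₃ h₄ hsum
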